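/- Let α, β ∈ ℂ and a', d', t ∈ ℝ, let D(t) = diag₄(exp(i·a'·t), exp(i·t), exp(i·t), exp(i·d'·t)), let χ : Fin 2 → ℂ be the vector (α, β) and χ' : Fin 2 → ℂ be the vector (−conj(β), conj(α)). For every ψ : Fin 2 → ℂ, the vector φ : Fin 2 → ℂ defined by φ(i) = Σ_{j : Fin 2} conj(χ'(j)) · (D(t).mulVec (ψ ⊗ᵥ χ))(i,j) satisfies φ(0) = α·β·(exp(i·t) − exp(i·a'·t))·ψ(0) and φ(1) = α·β·(exp(i·d'·t) − exp(i·t))·ψ(1); that is, the gadget acts as the diagonal matrix α·β·diag(exp(i·t) − exp(i·a'·t), exp(i·d'·t) − exp(i·t)). -/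

import Mathlib

/-! Since `D` is diagonal, the branch `|i⟩` of the input picks up the phase `D(i,j)` on the
ancilla component `χ j`; postselecting onto `χ' = (-β̄, ᾱ)` weighs these two components with
`-αβ` and `+αβ`, so only the difference `D(i,1) - D(i,0)` of the phases survives. -/

open Matrix

/-- `diag₄ (a,b,c,d)`. -/
noncomputable def diag4 (a b c d : ℂ) : Matrix (Fin 2 × Fin 2) (Fin 2 × Fin 2) ℂ :=
  Matrix.diagonal (fun p => !![a, b; c, d] p.1 p.2)

/-- Tensor product of two one-qubit vectors. -/
def tensorVec (u w : Fin 2 → ℂ) : Fin 2 × Fin 2 → ℂ := fun p => u p.1 * w p.2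

lemma diag4_mulVec_apply (a b c d : ℂ) (v : Fin 2 × Fin 2 → ℂ) (i j : Fin 2) :
    (diag4 a b c d *ᵥ v) (i, j) = !![a, b; c, d] i j * v (i, j) :=
  mulVec_diagonal _ _ _

lemma postselect_diag4_mulVec_tensorVec (α β a b c d : ℂ) (ψ : Fin 2 → ℂ) (i : Fin 2) :
    ∑ j : Fin 2, starRingEnd ℂ (![-starRingEnd ℂ β, starRingEnd ℂ α] j) *
        (diag4 a b c d *ᵥ tensorVec ψ ![α, β]) (i, j) =
      α * β * (!![a, b; c, d] i 1 - !![a, b; c, d] i 0) * ψ i := by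
  simp only [Fin.sum_univ_two, diag4_mulVec_apply, tensorVec, Matrix.cons_val_zero,
    Matrix.cons_val_one, map_neg, Complex.conj_conj]
  ring

/-- The postselection gadget `N(t)`: the input `ψ` on the first wire, ancilla
`χ = U|0⟩` on the second, applying `D(t)` and postselecting the second qubit onto
`U|1⟩` acts as the diagonal matrix `α·β·diag(exp(it) − exp(ia't), exp(id't) − exp(it))`. -/
theorem stmt_9 (α β : ℂ) (a' d' t : ℝ)
    (D : Matrix (Fin 2 × Fin 2) (Fin 2 × Fin 2) ℂ)
    (hD : D = diag4 (Complex.exp (Complex.I * (a' : ℂ) * (t : ℂ)))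
      (Complex.exp (Complex.I * (t : ℂ))) (Complex.exp (Complex.I * (t : ℂ)))
      (Complex.exp (Complex.I * (d' : ℂ) * (t : ℂ))))
    (χ χ' : Fin 2 → ℂ) (hχ : χ = ![α, β])
    (hχ' : χ' = ![-(starRingEnd ℂ) β, (starRingEnd ℂ) α]) :
    ∀ ψ : Fin 2 → ℂ,
      (∑ j : Fin 2, (starRingEnd ℂ) (χ' j) * D.mulVec (tensorVec ψ χ) (0, j)) =
        α * β * (Complex.exp (Complex.I * (t : ℂ)) -
          Complex.exp (Complex.I * (a' : ℂ) * (t : ℂ))) * ψ 0 ∧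
      (∑ j : Fin 2, (starRingEnd ℂ) (χ' j) * D.mulVec (tensorVec ψ χ) (1, j)) =
        α * β * (Complex.exp (Complex.I * (d' : ℂ) * (t : ℂ)) -
          Complex.exp (Complex.I * (t : ℂ))) * ψ 1 := by
  intro ψ
  subst hD hχ hχ'
  exact ⟨postselect_diag4_mulVec_tensorVec _ _ _ _ _ _ ψ 0,
    postselect_diag4_mulVec_tensorVec _ _ _ _ _ _ ψ 1⟩
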